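/- The barycentric weights for Chebyshev points of the second kind are correct: for nodes s_k = cos(kπ/n), k = 0,…,n, the quantities w_k = 1/∏_{j≠k}(s_k - s_j) satisfy w_k = c·(-1)^k·δ_k where δ_k = 1/2 for k = 0 or k = n and δ_k = 1 otherwise, for some nonzero constant c independent of k. -/

import Mathlib

/-! `U_{n-1}(cos θ) sin θ = sin nθ`, so every node is a root of `(x² - 1) U_{n-1}(x)`; comparing
leading coefficients, this polynomial is `2^(n-1)` times the nodal polynomial `ℓ` of the nodes.
Hence `1 / w_k = ℓ'(s_k)` is `2^(1-n)` times the derivative of `(x² - 1) U_{n-1}` at `s_k`, and that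
derivative is `x U_{n-1}(x) + n T_n(x)`. At `s_k` the term `n T_n(s_k)` is `n (-1)^k`, while
`s_k U_{n-1}(s_k)` vanishes at the interior nodes and is again `n (-1)^k` at the endpoints `±1`. -/

open Finset Polynomial Real

namespace Polynomial.Chebyshev

theorem derivative_X_sq_sub_one_mul_U {R : Type*} [CommRing R] (n : ℤ) :
    derivative ((X ^ 2 - 1) * U R n) = X * U R n + (n + 1 : R[X]) * T R (n + 1) := by
  rw [derivative_mul, derivative_sub, derivative_X_sq, derivative_one, C_ofNat]
  linear_combination -add_one_mul_T_eq_poly_in_U (R := R) n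

theorem U_eval_node_mul_sin {n : ℕ} (hn : n ≠ 0) (k : ℕ) :
    (U ℝ ((n : ℤ) - 1)).eval (node n k) * sin (k * π / n) = 0 := by
  have hθ : ((((n : ℤ) - 1 : ℤ) : ℝ) + 1) * (k * π / n) = k * π := by push_cast; field_simp; ring
  rw [node, U_real_cos, hθ, sin_nat_mul_pi]

theorem X_sq_sub_one_mul_U_eval_node {n : ℕ} (hn : n ≠ 0) (k : ℕ) :
    ((X ^ 2 - 1) * U ℝ ((n : ℤ) - 1)).eval (node n k) = 0 := by
  have hsin_sq : node n k ^ 2 - 1 = -sin (k * π / n) ^ 2 := by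
    rw [node, ← sin_sq_add_cos_sq (k * π / n)]; ring
  rw [eval_mul, eval_sub, eval_pow, eval_X, eval_one, hsin_sq]
  linear_combination -sin (k * π / n) * U_eval_node_mul_sin hn k

theorem node_mul_U_eval_node {n k : ℕ} (hn : n ≠ 0) (hk : k ≤ n) :
    node n k * (U ℝ ((n : ℤ) - 1)).eval (node n k) =
      if k = 0 ∨ k = n then (n : ℝ) * (-1) ^ k else 0 := by
  rcases eq_or_ne k 0 with rfl | hk₀
  · simp [node_eq_one, U_eval_one]
  rcases eq_or_ne k n with rfl | hkn
  · have hsign : ((k : ℤ) - 1).negOnePow = -(k : ℤ).negOnePow := by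
      rw [← neg_neg ((k : ℤ) - 1).negOnePow, ← Int.negOnePow_succ, sub_add_cancel]
    simp [node_eq_neg_one hn, U_eval_neg_one, hsign, mul_comm]
  have hsin : sin (k * π / n) ≠ 0 := by
    refine (sin_pos_of_pos_of_lt_pi (by positivity) ?_).ne'
    rw [div_lt_iff₀ (by positivity), mul_comm]
    gcongr
    exact_mod_cast lt_of_le_of_ne hk hkn
  rw [(mul_eq_zero.mp (U_eval_node_mul_sin hn k)).resolve_right hsin, mul_zero, if_neg (by tauto)]

theorem injOn_node_fin (n : ℕ) :
    Set.InjOn (fun k : Fin (n + 1) => node n k) (univ : Finset (Fin (n + 1))) := by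
  intro a _ b _ hab
  exact Fin.ext <| (strictAntiOn_node n).injOn (by simp [Nat.lt_succ_iff.mp a.isLt])
    (by simp [Nat.lt_succ_iff.mp b.isLt]) hab

theorem X_sq_sub_one_mul_U_eq_C_mul_nodal {n : ℕ} (hn : n ≠ 0) :
    (X ^ 2 - 1) * U ℝ ((n : ℤ) - 1) =
      Polynomial.C ((2 : ℝ) ^ (n - 1)) * Lagrange.nodal univ (fun k : Fin (n + 1) => node n k) := by
  have hidx : (n : ℤ) - 1 = ((n - 1 : ℕ) : ℤ) := by omega
  have hmonic : (X ^ 2 - 1 : ℝ[X]).Monic := monic_X_pow_sub_C 1 two_ne_zero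
  have hdeg : ((X ^ 2 - 1) * U ℝ ((n : ℤ) - 1)).degree = ((n + 1 : ℕ) : WithBot ℕ) := by
    have hX : (X ^ 2 - 1 : ℝ[X]).degree = 2 := by compute_degree!
    rw [degree_mul, hidx, degree_U_natCast, hX]
    norm_cast; omega
  refine eq_of_degree_le_of_eval_index_eq univ (injOn_node_fin n) ?_ ?_ ?_ ?_
  · simp [hdeg]
  · rw [hdeg, degree_C_mul (by positivity), Lagrange.degree_nodal, card_univ, Fintype.card_fin]
  · rw [leadingCoeff_mul, hmonic, hidx, leadingCoeff_U_natCast, leadingCoeff_mul, leadingCoeff_C,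
      Lagrange.nodal_monic.leadingCoeff, one_mul, mul_one]
  · intro k _
    rw [X_sq_sub_one_mul_U_eval_node hn, eval_mul,
      Lagrange.eval_nodal_at_node (v := fun k : Fin (n + 1) => node n k) (mem_univ k), mul_zero]

theorem two_pow_mul_prod_node_sub_node {n : ℕ} (hn : n ≠ 0) (k : Fin (n + 1)) :
    2 ^ (n - 1) * ∏ j ∈ univ.erase k, (node n k - node n j) =
      n * (-1) ^ (k : ℕ) * if (k : ℕ) = 0 ∨ (k : ℕ) = n then 2 else 1 := by
  have hk : (k : ℕ) ≤ n := Nat.lt_succ_iff.mp k.isLt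
  have h := congrArg (fun p => (derivative p).eval (node n k))
    (X_sq_sub_one_mul_U_eq_C_mul_nodal hn)
  simp only [derivative_X_sq_sub_one_mul_U, derivative_C_mul, eval_add, eval_mul, eval_X, eval_C,
    eval_intCast, eval_one, sub_add_cancel] at h
  rw [Lagrange.eval_nodal_derivative_eval_node_eq (v := fun k : Fin (n + 1) => node n k)
    (mem_univ k), Lagrange.eval_nodal, node_mul_U_eval_node hn hk,
    eval_T_real_node (mem_Iic.mpr hk)] at h
  rw [← h]
  split_ifs <;> push_cast <;> ring

end Polynomial.Chebyshev

/-- The barycentric weights at the Chebyshev points of the second kind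
`s_k = cos(kπ/n)` are proportional to `(-1)^k δ_k`, with `δ_k = 1/2` at the
endpoints `k = 0, n` and `δ_k = 1` otherwise. -/
theorem chebyshev_barycentric_weights (n : ℕ) (hn : 1 ≤ n) :
    ∃ c : ℝ, c ≠ 0 ∧ ∀ k : Fin (n + 1),
      (∏ j ∈ Finset.univ.erase k,
          (Real.cos ((k : ℕ) * Real.pi / n) - Real.cos ((j : ℕ) * Real.pi / n)))⁻¹
        = c * (-1) ^ (k : ℕ) *
            (if (k : ℕ) = 0 ∨ (k : ℕ) = n then (1 / 2 : ℝ) else 1) := by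
  have hn₀ : n ≠ 0 := Nat.one_le_iff_ne_zero.mp hn
  refine ⟨2 ^ (n - 1) / n, by positivity, fun k => ?_⟩
  have h := Chebyshev.two_pow_mul_prod_node_sub_node hn₀ k
  rw [mul_comm, ← eq_div_iff (by positivity)] at h
  unfold Chebyshev.node at h
  rw [h]
  rcases neg_one_pow_eq_or ℝ (k : ℕ) with hs | hs <;> split_ifs <;> field_simp <;> simp [hs]
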